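/- Within each descent class of Sₘ, the restriction of the left weak order has a unique minimal element, and this minimal element is the lexicographically smallest permutation in the class; moreover there is a unique maximal element, which is the lexicographically largest in the class. -/

import Mathlib

/-- `w` is a permutation word: a rearrangement of `[1,…,n]` where `n` is its length. -/
def IsPermWord (w : List ℕ) : Prop := w.Perm (List.range' 1 w.length)

/-- The descent set of a word `[a₁,…,aₘ]` : those `i ∈ {1,…,m−1}` with `aᵢ > a_{i+1}`. -/
def descSet (w : List ℕ) : Finset ℕ :=
  (Finset.Ioo 0 w.length).filter (fun i => w.getD i 0 < w.getD (i - 1) 0)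

/-- The set of inversions of a word (0-based index pairs `(i,j)`, `i < j`, `sᵢ > sⱼ`). -/
def invSet (σ : List ℕ) : Finset (ℕ × ℕ) :=
  ((Finset.range σ.length) ×ˢ (Finset.range σ.length)).filter
    (fun p => p.1 < p.2 ∧ σ.getD p.2 0 < σ.getD p.1 0)

/-- Lexicographic order on words. -/
def lexLE (σ τ : List ℕ) : Prop := σ = τ ∨ List.Lex (· < ·) σ τ

/-- Membership of the descent class of `D` in `Sₘ`. -/
def InClass (m : ℕ) (D : Finset ℕ) (σ : List ℕ) : Prop :=
  σ.length = m ∧ IsPermWord σ ∧ descSet σ = D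

/-!
Let `D` be a set of descent positions. Splitting `0, …, m-1` into maximal blocks whose internal
positions are descents, filling each block with consecutive values in decreasing order and the
blocks with increasing values gives a word of the class whose inversions `(i, j)` are exactly
those with `(i, j] ⊆ D`; a chain of descents forces each of them in every member of the class,
so this word is the least element. Complementing values `v ↦ m + 1 - v` exchanges `D` with its
complement and reverses the weak order, which gives the largest element.

The weak order refines the lexicographic order: at the first position where `σ` and `τ` differ,
a smaller entry of `τ` would leave `σ` with more inversions starting there. Antisymmetry of the
lexicographic order then gives uniqueness.
-/

theorem mem_invSet {σ : List ℕ} {i j : ℕ} :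
    (i, j) ∈ invSet σ ↔ i < j ∧ j < σ.length ∧ σ.getD j 0 < σ.getD i 0 := by
  simp only [invSet, Finset.mem_filter, Finset.mem_product, Finset.mem_range]
  constructor
  · rintro ⟨⟨-, hj⟩, hij, hlt⟩
    exact ⟨hij, hj, hlt⟩
  · rintro ⟨hij, hj, hlt⟩
    exact ⟨⟨by omega, hj⟩, hij, hlt⟩

theorem mem_descSet {w : List ℕ} {i : ℕ} :
    i ∈ descSet w ↔ 0 < i ∧ (i - 1, i) ∈ invSet w := by
  simp only [descSet, Finset.mem_filter, Finset.mem_Ioo, mem_invSet]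
  constructor
  · rintro ⟨⟨hi, hlen⟩, hlt⟩
    exact ⟨hi, by omega, hlen, hlt⟩
  · rintro ⟨hi, -, hlen, hlt⟩
    exact ⟨⟨hi, hlen⟩, hlt⟩

theorem mem_invSet_of_Ioc_subset_descSet {τ : List ℕ} {i j : ℕ} (hij : i < j)
    (hj : j < τ.length) (hdesc : Finset.Ioc i j ⊆ descSet τ) : (i, j) ∈ invSet τ := by
  induction j, hij using Nat.le_induction with
  | base =>
    have h := (mem_descSet.mp (hdesc (Finset.right_mem_Ioc.mpr (Nat.lt_succ_self i)))).2
    rwa [Nat.succ_sub_one] at h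
  | succ j hij ih =>
    have hstep := (mem_descSet.mp (hdesc (Finset.right_mem_Ioc.mpr (by omega)))).2
    rw [Nat.add_sub_cancel, mem_invSet] at hstep
    have hprev := mem_invSet.mp
      (ih (by omega) ((Finset.Ioc_subset_Ioc_right (Nat.le_succ j)).trans hdesc))
    exact mem_invSet.mpr ⟨by omega, hj, hstep.2.2.trans hprev.2.2⟩

theorem IsPermWord.nodup {w : List ℕ} (hw : IsPermWord w) : w.Nodup :=
  hw.nodup_iff.mpr List.nodup_range'

theorem IsPermWord.mem_iff {w : List ℕ} (hw : IsPermWord w) {x : ℕ} :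
    x ∈ w ↔ 1 ≤ x ∧ x ≤ w.length := by
  rw [List.Perm.mem_iff hw, List.mem_range'_1]
  omega

theorem isPermWord_of_nodup {w : List ℕ} (hw : w.Nodup)
    (hmem : ∀ x ∈ w, 1 ≤ x ∧ x ≤ w.length) : IsPermWord w :=
  (hw.subperm fun x hx => List.mem_range'_1.mpr (by have := hmem x hx; omega)).perm_of_length_le
    (by simp)

theorem getD_ne_getD_of_nodup {w : List ℕ} (hw : w.Nodup) {i j : ℕ} (hi : i < w.length)
    (hj : j < w.length) (hij : i ≠ j) : w.getD i 0 ≠ w.getD j 0 := by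
  rw [List.getD_eq_getElem w 0 hi, List.getD_eq_getElem w 0 hj]
  exact fun h => hij (hw.getElem_inj_iff.mp h)

theorem getD_mem_Icc_of_isPermWord {w : List ℕ} (hw : IsPermWord w) {i : ℕ}
    (hi : i < w.length) :
    1 ≤ w.getD i 0 ∧ w.getD i 0 ≤ w.length := by
  rw [List.getD_eq_getElem w 0 hi]
  exact hw.mem_iff.mp (List.getElem_mem hi)

def complementWord (w : List ℕ) : List ℕ := w.map (w.length + 1 - ·)

@[simp]
theorem length_complementWord (w : List ℕ) : (complementWord w).length = w.length :=
  List.length_map _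

theorem getD_complementWord {w : List ℕ} {i : ℕ} (hi : i < w.length) :
    (complementWord w).getD i 0 = w.length + 1 - w.getD i 0 := by
  rw [complementWord, List.getD_eq_getElem _ 0 (by simpa using hi),
    List.getD_eq_getElem w 0 hi, List.getElem_map]

theorem IsPermWord.complementWord {w : List ℕ} (hw : IsPermWord w) :
    IsPermWord (complementWord w) := by
  refine isPermWord_of_nodup (hw.nodup.map_on fun x hx y hy hxy => ?_) fun x hx => ?_
  · have := hw.mem_iff.mp hx
    have := hw.mem_iff.mp hy
    omega
  · obtain ⟨y, hy, rfl⟩ := List.mem_map.mp hx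
    have := hw.mem_iff.mp hy
    simp only [length_complementWord]
    omega

theorem mem_invSet_complementWord {w : List ℕ} (hw : IsPermWord w) {i j : ℕ} :
    (i, j) ∈ invSet (complementWord w) ↔ i < j ∧ j < w.length ∧ (i, j) ∉ invSet w := by
  simp only [mem_invSet, length_complementWord]
  constructor
  · rintro ⟨hij, hj, hlt⟩
    rw [getD_complementWord hj, getD_complementWord (by omega)] at hlt
    exact ⟨hij, hj, by omega⟩
  · rintro ⟨hij, hj, hnot⟩
    have hne := getD_ne_getD_of_nodup hw.nodup (by omega) hj hij.ne
    have := getD_mem_Icc_of_isPermWord hw hj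
    have := getD_mem_Icc_of_isPermWord hw (i := i) (by omega)
    rw [getD_complementWord hj, getD_complementWord (by omega)]
    exact ⟨hij, hj, by omega⟩

theorem descSet_complementWord {w : List ℕ} (hw : IsPermWord w) :
    descSet (complementWord w) = Finset.Ioo 0 w.length \ descSet w := by
  ext i
  simp only [Finset.mem_sdiff, Finset.mem_Ioo, mem_descSet, mem_invSet_complementWord hw]
  constructor
  · rintro ⟨hi, -, hlen, hnot⟩
    exact ⟨⟨hi, hlen⟩, fun h => hnot h.2⟩
  · rintro ⟨⟨hi, hlen⟩, hnot⟩
    exact ⟨hi, by omega, hlen, fun h => hnot ⟨hi, h⟩⟩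

theorem InClass.complementWord {m : ℕ} {D : Finset ℕ} {τ : List ℕ} (hτ : InClass m D τ) :
    InClass m (Finset.Ioo 0 m \ D) (complementWord τ) := by
  obtain ⟨hlen, hperm, hdesc⟩ := hτ
  refine ⟨by simpa using hlen, hperm.complementWord, ?_⟩
  rw [descSet_complementWord hperm, hlen, hdesc]

theorem card_filter_range_getD (s : List ℕ) (p : ℕ → Prop) [DecidablePred p] :
    ((Finset.range s.length).filter fun j => p (s.getD j 0)).card = s.countP (p ·) := by
  rw [← Nat.count_eq_card_filter_range]
  induction s with
  | nil => simp
  | cons a s ih =>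
    simp only [List.length_cons, Nat.count_succ', List.getD_cons_succ, List.getD_cons_zero, ih,
      List.countP_cons, decide_eq_true_eq]

theorem succ_mem_invSet_cons {a : ℕ} {s : List ℕ} {i j : ℕ} :
    (i + 1, j + 1) ∈ invSet (a :: s) ↔ (i, j) ∈ invSet s := by
  simp only [mem_invSet, List.length_cons, List.getD_cons_succ, Nat.add_lt_add_iff_right]

theorem zero_mem_invSet_cons {a : ℕ} {s : List ℕ} {j : ℕ} :
    (0, j + 1) ∈ invSet (a :: s) ↔ j < s.length ∧ s.getD j 0 < a := by
  simp only [mem_invSet, List.length_cons, List.getD_cons_succ, List.getD_cons_zero,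
    Nat.add_lt_add_iff_right, Nat.zero_lt_succ, true_and]

theorem lexLE_of_invSet_subset {σ τ : List ℕ} (hperm : σ.Perm τ)
    (hsub : invSet σ ⊆ invSet τ) : lexLE σ τ := by
  induction σ generalizing τ with
  | nil => exact Or.inl (List.nil_perm.mp hperm).symm
  | cons a s ih =>
    obtain _ | ⟨b, t⟩ := τ
    · exact absurd (List.perm_nil.mp hperm) (List.cons_ne_nil a s)
    rcases lt_trichotomy a b with hab | rfl | hba
    · exact Or.inr (List.Lex.rel hab)
    · have hst : invSet s ⊆ invSet t := fun ⟨i, j⟩ h =>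
        succ_mem_invSet_cons.mp (hsub (succ_mem_invSet_cons.mpr h))
      rcases ih hperm.cons_inv hst with rfl | hlex
      · exact Or.inl rfl
      · exact Or.inr (List.Lex.cons hlex)
    · have hrow : (Finset.range s.length).filter (fun j => s.getD j 0 < a) ⊆
          (Finset.range t.length).filter (fun j => t.getD j 0 < b) := fun j hj => by
        simp only [Finset.mem_filter, Finset.mem_range] at hj ⊢
        exact zero_mem_invSet_cons.mp (hsub (zero_mem_invSet_cons.mpr hj))
      have hcount := Finset.card_le_card hrow
      rw [card_filter_range_getD s (· < a), card_filter_range_getD t (· < b)] at hcount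
      have hcount_a := List.Perm.countP_eq (· < a) hperm
      have hmono : t.countP (· < b) ≤ t.countP (· < a) :=
        List.countP_mono_left fun x _ hx => by simp only [decide_eq_true_eq] at hx ⊢; omega
      simp only [List.countP_cons, lt_irrefl, hba, decide_true, decide_false, Bool.false_eq_true,
        if_true, if_false] at hcount_a
      omega

theorem lexLE_antisymm {σ τ : List ℕ} (h₁ : lexLE σ τ) (h₂ : lexLE τ σ) : σ = τ := by
  rcases h₁ with rfl | h₁
  · rfl
  rcases h₂ with rfl | h₂
  · rfl
  · exact absurd h₂ (asymm h₁)

theorem lexLE_of_inClass {m : ℕ} {D : Finset ℕ} {σ τ : List ℕ} (hσ : InClass m D σ)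
    (hτ : InClass m D τ) (hsub : invSet σ ⊆ invSet τ) : lexLE σ τ := by
  refine lexLE_of_invSet_subset (hσ.2.1.trans ?_) hsub
  rw [hσ.1, ← hτ.1]
  exact hτ.2.1.symm

section Blocks

variable (D : Finset ℕ)

/-- Start of the maximal run of descents `(blockStart D p, p] ⊆ D` ending at `p`. -/
def blockStart (p : ℕ) : ℕ := Nat.findGreatest (· ∉ D) p

theorem exists_le_succ_not_mem (p : ℕ) : ∃ k, p ≤ k ∧ k + 1 ∉ D := by
  obtain ⟨n, hn⟩ := D.exists_nat_subset_range
  exact ⟨p + n, by omega, fun h => by have := Finset.mem_range.mp (hn h); omega⟩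

/-- End of the maximal run of descents `(p, blockEnd D p] ⊆ D` starting after `p`. -/
def blockEnd (p : ℕ) : ℕ := Nat.find (exists_le_succ_not_mem D p)

/-- The word `minWord m D` lists the blocks of consecutive positions left to right, the block
`[s, e]` carrying the values `e + 1, e, …, s + 1` in decreasing order. -/
def minEntry (p : ℕ) : ℕ := blockStart D p + blockEnd D p + 1 - p

variable {D}

theorem blockStart_le (p : ℕ) : blockStart D p ≤ p := Nat.findGreatest_le p

theorem mem_of_blockStart_lt {p k : ℕ} (h₁ : blockStart D p < k) (h₂ : k ≤ p) : k ∈ D :=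
  not_not.mp (Nat.findGreatest_is_greatest h₁ h₂)

theorem le_blockStart {p k : ℕ} (hk : k ≤ p) (hkD : k ∉ D) : k ≤ blockStart D p :=
  Nat.le_findGreatest hk hkD

theorem le_blockEnd (p : ℕ) : p ≤ blockEnd D p := (Nat.find_spec (exists_le_succ_not_mem D p)).1

theorem blockEnd_succ_not_mem (p : ℕ) : blockEnd D p + 1 ∉ D :=
  (Nat.find_spec (exists_le_succ_not_mem D p)).2

theorem blockEnd_le {p k : ℕ} (hk : p ≤ k) (hkD : k + 1 ∉ D) : blockEnd D p ≤ k :=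
  Nat.find_min' _ ⟨hk, hkD⟩

theorem blockEnd_lt {p k : ℕ} (hk : p < k) (hkD : k ∉ D) : blockEnd D p < k :=
  Nat.lt_of_le_sub_one (Nat.zero_lt_of_lt hk)
    (blockEnd_le (Nat.le_sub_one_of_lt hk) (by rwa [Nat.sub_add_cancel (Nat.one_le_of_lt hk)]))

theorem blockStart_eq_of_Ioc_subset {i j : ℕ} (hij : i ≤ j) (h : Finset.Ioc i j ⊆ D) :
    blockStart D j = blockStart D i := by
  refine Nat.findGreatest_eq_iff.mpr ⟨(blockStart_le i).trans hij,
    (Nat.findGreatest_eq_iff.mp rfl).2.1, fun n hn hnj => not_not.mpr ?_⟩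
  rcases le_or_gt n i with hni | hin
  · exact mem_of_blockStart_lt hn hni
  · exact h (Finset.mem_Ioc.mpr ⟨hin, hnj⟩)

theorem blockEnd_eq_of_Ioc_subset {i j : ℕ} (hij : i ≤ j) (h : Finset.Ioc i j ⊆ D) :
    blockEnd D i = blockEnd D j := by
  have hj : j ≤ blockEnd D i := by
    by_contra hlt
    have := le_blockEnd (D := D) i
    exact blockEnd_succ_not_mem i (h (Finset.mem_Ioc.mpr ⟨by omega, by omega⟩))
  exact le_antisymm (blockEnd_le (hij.trans (le_blockEnd j)) (blockEnd_succ_not_mem j))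
    (blockEnd_le hj (blockEnd_succ_not_mem i))

theorem minEntry_lt_of_Ioc_subset {i j : ℕ} (hij : i < j) (h : Finset.Ioc i j ⊆ D) :
    minEntry D j < minEntry D i := by
  have hs := blockStart_eq_of_Ioc_subset hij.le h
  have he := blockEnd_eq_of_Ioc_subset hij.le h
  have := blockStart_le (D := D) i
  have := le_blockEnd (D := D) j
  unfold minEntry
  omega

theorem minEntry_lt_of_not_Ioc_subset {i j : ℕ} (h : ¬Finset.Ioc i j ⊆ D) :
    minEntry D i < minEntry D j := by
  obtain ⟨k, hk, hkD⟩ := Finset.not_subset.mp h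
  rw [Finset.mem_Ioc] at hk
  have hend := blockEnd_lt hk.1 hkD
  have hstart := le_blockStart hk.2 hkD
  have := blockStart_le (D := D) i
  have := le_blockEnd (D := D) j
  unfold minEntry
  omega

theorem minEntry_injective : Function.Injective (minEntry D) := by
  intro i j hij
  by_contra hne
  wlog hlt : i < j generalizing i j
  · exact this hij.symm (Ne.symm hne) (by omega)
  by_cases h : Finset.Ioc i j ⊆ D
  · exact (minEntry_lt_of_Ioc_subset hlt h).ne' hij
  · exact (minEntry_lt_of_not_Ioc_subset h).ne hij

end Blocks

section MinMax

variable {m : ℕ} {D : Finset ℕ}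

def minWord (m : ℕ) (D : Finset ℕ) : List ℕ := (List.range m).map (minEntry D)

@[simp]
theorem length_minWord : (minWord m D).length = m := by simp [minWord]

theorem getD_minWord {p : ℕ} (hp : p < m) : (minWord m D).getD p 0 = minEntry D p := by
  rw [minWord, List.getD_eq_getElem _ 0 (by simpa using hp), List.getElem_map, List.getElem_range]

theorem mem_invSet_minWord {i j : ℕ} :
    (i, j) ∈ invSet (minWord m D) ↔ i < j ∧ j < m ∧ Finset.Ioc i j ⊆ D := by
  rw [mem_invSet, length_minWord]
  constructor
  · rintro ⟨hij, hj, hlt⟩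
    rw [getD_minWord hj, getD_minWord (hij.trans hj)] at hlt
    exact ⟨hij, hj, not_not.mp fun h => (minEntry_lt_of_not_Ioc_subset h).not_gt hlt⟩
  · rintro ⟨hij, hj, hsub⟩
    rw [getD_minWord hj, getD_minWord (hij.trans hj)]
    exact ⟨hij, hj, minEntry_lt_of_Ioc_subset hij hsub⟩

theorem minWord_isPermWord (hm : m ∉ D) : IsPermWord (minWord m D) := by
  refine isPermWord_of_nodup (List.nodup_range.map minEntry_injective) fun x hx => ?_
  obtain ⟨p, hp, rfl⟩ := List.mem_map.mp hx
  rw [List.mem_range] at hp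
  have := blockEnd_lt hp hm
  have := blockStart_le (D := D) p
  have := le_blockEnd (D := D) p
  rw [length_minWord]
  unfold minEntry
  omega

theorem descSet_minWord (hD : D ⊆ Finset.Ioo 0 m) : descSet (minWord m D) = D := by
  ext i
  rw [mem_descSet, mem_invSet_minWord]
  constructor
  · rintro ⟨hi, -, -, h⟩
    exact h (Finset.mem_Ioc.mpr ⟨by omega, le_rfl⟩)
  · intro hiD
    obtain ⟨hi, him⟩ := Finset.mem_Ioo.mp (hD hiD)
    refine ⟨hi, by omega, him, fun k hk => ?_⟩
    rw [Finset.mem_Ioc] at hk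
    rwa [show k = i by omega]

theorem minWord_inClass (hD : D ⊆ Finset.Ioo 0 m) : InClass m D (minWord m D) :=
  ⟨length_minWord, minWord_isPermWord fun h => by simpa using hD h, descSet_minWord hD⟩

theorem invSet_minWord_subset {τ : List ℕ} (hτ : InClass m D τ) :
    invSet (minWord m D) ⊆ invSet τ := by
  rintro ⟨i, j⟩ h
  obtain ⟨hij, hj, hsub⟩ := mem_invSet_minWord.mp h
  obtain ⟨hlen, -, hdesc⟩ := hτ
  exact mem_invSet_of_Ioc_subset_descSet hij (hlen ▸ hj) (hdesc ▸ hsub)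

def maxWord (m : ℕ) (D : Finset ℕ) : List ℕ := complementWord (minWord m (Finset.Ioo 0 m \ D))

theorem maxWord_inClass (hD : D ⊆ Finset.Ioo 0 m) : InClass m D (maxWord m D) := by
  have h := (minWord_inClass (m := m) (Finset.sdiff_subset (t := D))).complementWord
  rwa [Finset.sdiff_sdiff_eq_self hD] at h

theorem invSet_subset_maxWord {τ : List ℕ} (hτ : InClass m D τ) :
    invSet τ ⊆ invSet (maxWord m D) := by
  rintro ⟨i, j⟩ h
  have hmin : IsPermWord (minWord m (Finset.Ioo 0 m \ D)) := minWord_isPermWord (by simp)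
  obtain ⟨hij, hj, -⟩ := mem_invSet.mp h
  rw [maxWord, mem_invSet_complementWord hmin, length_minWord]
  refine ⟨hij, hτ.1 ▸ hj, fun hminInv => ?_⟩
  exact ((mem_invSet_complementWord hτ.2.1).mp
    (invSet_minWord_subset hτ.complementWord hminInv)).2.2 h

end MinMax

/-- In each descent class of `Sₘ` the left weak order (inclusion of inversion sets) has a
unique smallest element, which is the lexicographically smallest member of the class,
and a unique largest element, which is the lexicographically largest member. -/
theorem stmt16 (m : ℕ) (D : Finset ℕ) (hD : D ⊆ Finset.Ioo 0 m) :
    (∃! σ : List ℕ, InClass m D σ ∧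
        ∀ τ : List ℕ, InClass m D τ → invSet σ ⊆ invSet τ) ∧
    (∀ σ : List ℕ, InClass m D σ →
        (∀ τ : List ℕ, InClass m D τ → invSet σ ⊆ invSet τ) →
        ∀ τ : List ℕ, InClass m D τ → lexLE σ τ) ∧
    (∃! σ : List ℕ, InClass m D σ ∧
        ∀ τ : List ℕ, InClass m D τ → invSet τ ⊆ invSet σ) ∧
    (∀ σ : List ℕ, InClass m D σ →
        (∀ τ : List ℕ, InClass m D τ → invSet τ ⊆ invSet σ) →
        ∀ τ : List ℕ, InClass m D τ → lexLE τ σ) := by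
  have hmin := minWord_inClass hD
  have hmax := maxWord_inClass hD
  refine ⟨⟨minWord m D, ⟨hmin, fun τ hτ => invSet_minWord_subset hτ⟩, ?_⟩,
    fun σ hσ hσmin τ hτ => lexLE_of_inClass hσ hτ (hσmin τ hτ),
    ⟨maxWord m D, ⟨hmax, fun τ hτ => invSet_subset_maxWord hτ⟩, ?_⟩,
    fun σ hσ hσmax τ hτ => lexLE_of_inClass hτ hσ (hσmax τ hτ)⟩
  · rintro σ ⟨hσ, hσmin⟩
    exact lexLE_antisymm (lexLE_of_inClass hσ hmin (hσmin _ hmin))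
      (lexLE_of_inClass hmin hσ (invSet_minWord_subset hσ))
  · rintro σ ⟨hσ, hσmax⟩
    exact lexLE_antisymm (lexLE_of_inClass hσ hmax (invSet_subset_maxWord hσ))
      (lexLE_of_inClass hmax hσ (hσmax _ hmax))
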